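/- arXiv:0810.3895 — 3 statements merged into one kernel-verified Lean document; each statement's English description precedes it below -/
import Mathlib

section
/- Let H be a real Hilbert space, D = D(c,r) an open ball of radius r, P ⊆ H a set, and z ∈ conv(P ∩ D) with dist(z,P) ≤ α·r for some 0 ≤ α < 1. Then dist(z, P ∩ D) ≤ √(2α - α²)·r. -/
/-!
Write `D = ball c r`, `S = P ∩ D` and `ρ = ‖z - c‖`. If `dist(z, P) < r - ρ`, the points of `P`
nearly realising `dist(z, P)` already lie in `D`, so `dist(z, S) ≤ dist(z, P) ≤ α r`. Otherwise
`ρ ≥ r - α r`. Since `z ∈ conv S`, some `q ∈ S` satisfies `⟪q - z, z - c⟫ ≥ 0`, and expanding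
`‖q - c‖² = ‖(q - z) + (z - c)‖²` gives `‖q - z‖² ≤ ‖q - c‖² - ρ² < r² - (1 - α)² r² = (2α - α²) r²`.
-/

open Metric
open scoped RealInnerProductSpace

theorem Metric.infDist_inter_ball_le {X : Type*} [PseudoMetricSpace X] {P : Set X} {c z : X}
    {r : ℝ} (h : infDist z P < r - dist z c) :
    infDist z (P ∩ ball c r) ≤ infDist z P := by
  rcases P.eq_empty_or_nonempty with rfl | hP
  · simp
  refine le_of_forall_gt fun t ht => ?_
  obtain ⟨p, hpP, hzp⟩ := (infDist_lt_iff hP).1 (lt_min ht h)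
  have hpD : p ∈ ball c r := by
    rw [mem_ball]
    linarith [dist_triangle_left p c z, min_le_right t (r - dist z c)]
  exact (infDist_le_dist_of_mem (Set.mem_inter hpP hpD)).trans_lt
    (hzp.trans_le (min_le_left _ _))

section InnerProductSpace

variable {H : Type*} [NormedAddCommGroup H] [InnerProductSpace ℝ H]

theorem exists_mem_inner_le_of_mem_convexHull {S : Set H} {z : H} (hz : z ∈ convexHull ℝ S)
    (v : H) : ∃ q ∈ S, ⟪z, v⟫ ≤ ⟪q, v⟫ :=
  ((innerₛₗ ℝ).flip v).convexOn (convex_convexHull ℝ S)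
    |>.exists_ge_of_mem_convexHull (subset_convexHull ℝ S) hz

theorem exists_mem_dist_sq_add_dist_sq_lt_of_mem_convexHull {S : Set H} {c z : H} {r : ℝ}
    (hS : S ⊆ ball c r) (hz : z ∈ convexHull ℝ S) :
    ∃ q ∈ S, dist z q ^ 2 + dist z c ^ 2 < r ^ 2 := by
  obtain ⟨q, hqS, hq⟩ := exists_mem_inner_le_of_mem_convexHull hz (z - c)
  refine ⟨q, hqS, ?_⟩
  have hqc : ‖q - c‖ < r := mem_ball_iff_norm.1 (hS hqS)
  have hexpand : ‖q - c‖ ^ 2 = ‖q - z‖ ^ 2 + 2 * ⟪q - z, z - c⟫ + ‖z - c‖ ^ 2 := by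
    rw [← norm_add_sq_real, sub_add_sub_cancel]
  have hinner : 0 ≤ ⟪q - z, z - c⟫ := by
    rw [inner_sub_left]
    linarith
  rw [dist_comm z q, dist_eq_norm, dist_eq_norm]
  nlinarith [norm_nonneg (q - c)]

end InnerProductSpace

theorem le_sqrt_two_mul_sub_sq {α : ℝ} (h0 : 0 ≤ α) (h1 : α ≤ 1) : α ≤ √(2 * α - α ^ 2) :=
  Real.le_sqrt_of_sq_le (by nlinarith)

theorem stmt5 {H : Type*} [NormedAddCommGroup H] [InnerProductSpace ℝ H]
    (P : Set H) (c z : H) (r α : ℝ) (hr : 0 < r) (hα0 : 0 ≤ α) (hα1 : α < 1)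
    (hz : z ∈ convexHull ℝ (P ∩ Metric.ball c r))
    (hdist : Metric.infDist z P ≤ α * r) :
    Metric.infDist z (P ∩ Metric.ball c r) ≤ Real.sqrt (2 * α - α ^ 2) * r := by
  by_cases hnear : infDist z P < r - dist z c
  · calc infDist z (P ∩ ball c r) ≤ infDist z P := infDist_inter_ball_le hnear
      _ ≤ α * r := hdist
      _ ≤ √(2 * α - α ^ 2) * r := by gcongr; exact le_sqrt_two_mul_sub_sq hα0 hα1.le
  · obtain ⟨q, hqS, hq⟩ :=
      exists_mem_dist_sq_add_dist_sq_lt_of_mem_convexHull Set.inter_subset_right hz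
    have hzc : (1 - α) * r ≤ dist z c := by linarith
    have hzq : dist z q ≤ √((2 * α - α ^ 2) * r ^ 2) :=
      Real.le_sqrt_of_sq_le (by nlinarith [mul_nonneg (sub_nonneg.2 hα1.le) hr.le])
    rw [Real.sqrt_mul' _ (sq_nonneg r), Real.sqrt_sq hr.le] at hzq
    exact (infDist_le_dist_of_mem hqS).trans hzq
end

section
/- Every α-paraconvex subset P of a real Hilbert space H (0 ≤ α < 1) is strongly φ(α)-paraconvex, where φ(α) = √(2α - α²): for every open ball D of radius r and every q ∈ conv(P ∩ D), dist(q, P ∩ D) ≤ φ(α)·r. -/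
/-!
Fix a ball `D = ball c r` and `q ∈ conv(P ∩ D)`. If `q` is near the centre, `dist q c < (1 - α) r`,
then the points of `P` within `α r` of `q` lie in `D`, so `dist(q, P ∩ D) ≤ α r ≤ φ(α) r`.
Otherwise the linear functional `⟪q - c, ·⟫` attains at some `x ∈ P ∩ D` a value at least its value
at `q`; then `⟪q - c, x - q⟫ ≥ 0` and Pythagoras gives
`‖x - q‖² ≤ r² - ‖q - c‖² ≤ r² - (1 - α)² r² = φ(α)² r²`.
-/

open Metric

section InnerProductSpace

variable {H : Type*} [NormedAddCommGroup H] [InnerProductSpace ℝ H]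

theorem exists_mem_dist_sq_le_of_mem_convexHull_inter_ball {S : Set H} {c q : H} {r : ℝ}
    (hq : q ∈ convexHull ℝ (S ∩ ball c r)) :
    ∃ x ∈ S ∩ ball c r, dist q x ^ 2 ≤ r ^ 2 - dist q c ^ 2 := by
  obtain ⟨x, hx, hqx⟩ :=
    ((innerSL ℝ (q - c)).toLinearMap.convexOn convex_univ).exists_ge_of_mem_convexHull
      (Set.subset_univ _) hq
  simp only [ContinuousLinearMap.coe_coe, innerSL_apply_apply] at hqx
  have hinner : 0 ≤ inner ℝ (q - c) (x - q) := by
    rw [inner_sub_right]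
    linarith
  have hpythagoras : ‖x - c‖ ^ 2 = ‖x - q‖ ^ 2 + 2 * inner ℝ (q - c) (x - q) + ‖q - c‖ ^ 2 := by
    rw [← sub_add_sub_cancel x q c, norm_add_sq_real, real_inner_comm]
  have hxc : ‖x - c‖ < r := mem_ball_iff_norm.1 hx.2
  refine ⟨x, hx, ?_⟩
  rw [dist_eq_norm, dist_eq_norm, norm_sub_rev]
  nlinarith [norm_nonneg (x - c)]

theorem infDist_le_sqrt_of_mem_convexHull_inter_ball {S : Set H} {c q : H} {r : ℝ}
    (hq : q ∈ convexHull ℝ (S ∩ ball c r)) :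
    infDist q (S ∩ ball c r) ≤ √(r ^ 2 - dist q c ^ 2) := by
  obtain ⟨x, hx, hqx⟩ := exists_mem_dist_sq_le_of_mem_convexHull_inter_ball hq
  exact (infDist_le_dist_of_mem hx).trans (Real.le_sqrt_of_sq_le hqx)

end InnerProductSpace

theorem infDist_inter_ball_le_of_infDist_le {E : Type*} [PseudoMetricSpace E] {S : Set E}
    {c q : E} {a r : ℝ} (hS : S.Nonempty) (hqS : infDist q S ≤ a) (har : dist q c + a < r) :
    infDist q (S ∩ ball c r) ≤ a := by
  by_contra! h
  have hab : a < min (infDist q (S ∩ ball c r)) (r - dist q c) := lt_min h (by linarith)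
  obtain ⟨x, hxS, hqx⟩ := (infDist_lt_iff hS).1 (hqS.trans_lt hab)
  have hxc : x ∈ ball c r := by
    rw [mem_ball]
    linarith [dist_triangle_left x c q, min_le_right (infDist q (S ∩ ball c r)) (r - dist q c)]
  have := infDist_le_dist_of_mem (x := q) (show x ∈ S ∩ ball c r from ⟨hxS, hxc⟩)
  linarith [min_le_left (infDist q (S ∩ ball c r)) (r - dist q c)]

theorem stmt6_general {H : Type*} [NormedAddCommGroup H] [InnerProductSpace ℝ H]
    (P : Set H) (α : ℝ) (hα0 : 0 ≤ α) (hα1 : α < 1)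
    (hpara : ∀ (c : H) (r : ℝ), 0 < r →
      ∀ q ∈ convexHull ℝ (P ∩ Metric.ball c r), Metric.infDist q P ≤ α * r) :
    ∀ (c : H) (r : ℝ), 0 < r →
      ∀ q ∈ convexHull ℝ (P ∩ Metric.ball c r),
        Metric.infDist q (P ∩ Metric.ball c r) ≤ Real.sqrt (2 * α - α ^ 2) * r := by
  intro c r hr q hq
  rcases le_or_gt ((1 - α) * r) (dist q c) with hfar | hnear
  · calc infDist q (P ∩ ball c r) ≤ √(r ^ 2 - dist q c ^ 2) :=
          infDist_le_sqrt_of_mem_convexHull_inter_ball hq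
      _ ≤ √((2 * α - α ^ 2) * r ^ 2) :=
          Real.sqrt_le_sqrt (by nlinarith [mul_nonneg (sub_nonneg.2 hα1.le) hr.le])
      _ = √(2 * α - α ^ 2) * r := by rw [Real.sqrt_mul' _ (sq_nonneg r), Real.sqrt_sq hr.le]
  · have hP : P.Nonempty := (convexHull_nonempty_iff.1 ⟨q, hq⟩).mono Set.inter_subset_left
    calc infDist q (P ∩ ball c r) ≤ α * r :=
          infDist_inter_ball_le_of_infDist_le hP (hpara c r hr q hq) (by linarith)
      _ ≤ √(2 * α - α ^ 2) * r :=
          mul_le_mul_of_nonneg_right (Real.le_sqrt_of_sq_le (by nlinarith)) hr.le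

theorem stmt6 {H : Type*} [NormedAddCommGroup H] [InnerProductSpace ℝ H]
    (P : Set H) (hne : P.Nonempty) (hcl : IsClosed P) (α : ℝ) (hα0 : 0 ≤ α) (hα1 : α < 1)
    (hpara : ∀ (c : H) (r : ℝ), 0 < r →
      ∀ q ∈ convexHull ℝ (P ∩ Metric.ball c r), Metric.infDist q P ≤ α * r) :
    ∀ (c : H) (r : ℝ), 0 < r →
      ∀ q ∈ convexHull ℝ (P ∩ Metric.ball c r),
        Metric.infDist q (P ∩ Metric.ball c r) ≤ Real.sqrt (2 * α - α ^ 2) * r :=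
  stmt6_general P α hα0 hα1 hpara
end

section
/- For 0 < γ < 1 let φ(t) = √(2t - t²). The sequence defined by γ₁ = γ, γ_{n+1} = γ·φ(γ_n) is monotone decreasing and converges to 2γ²/(1+γ²). -/
theorem stmt7 (γ : ℝ) (h0 : 0 < γ) (h1 : γ < 1) (g : ℕ → ℝ)
    (hg1 : g 1 = γ)
    (hrec : ∀ n ≥ 1, g (n + 1) = γ * Real.sqrt (2 * g n - (g n) ^ 2)) :
    (∀ n ≥ 1, g (n + 1) ≤ g n) ∧
      Filter.Tendsto g Filter.atTop (nhds (2 * γ ^ 2 / (1 + γ ^ 2))) := by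
  set L : ℝ := 2 * γ ^ 2 / (1 + γ ^ 2) with hL
  have hden : (0:ℝ) < 1 + γ ^ 2 := by positivity
  have hLpos : 0 < L := by positivity
  have hLγ : L ≤ γ := by
    rw [hL, div_le_iff₀ hden]; nlinarith [sq_nonneg (1 - γ)]
  -- invariant: L ≤ g n ≤ γ for n ≥ 1
  have hinv : ∀ n, 1 ≤ n → L ≤ g n ∧ g n ≤ γ := by
    intro n hn
    induction n, hn using Nat.le_induction with
    | base => rw [hg1]; exact ⟨hLγ, le_refl _⟩
    | succ n hn ih =>
      obtain ⟨hl, hu⟩ := ih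
      have ht0 : 0 < g n := lt_of_lt_of_le hLpos hl
      have ht1 : g n < 1 := lt_of_le_of_lt hu h1
      have harg : 0 ≤ 2 * g n - (g n) ^ 2 := by nlinarith
      rw [hrec n hn]
      constructor
      · have hl' : 2 * γ ^ 2 ≤ g n * (1 + γ ^ 2) := by
          rw [hL, div_le_iff₀ hden] at hl; linarith
        have ha : 0 ≤ g n * (1 + γ ^ 2) - 2 * γ ^ 2 := by linarith
        have hb : 0 ≤ 2 - g n * (1 + γ ^ 2) := by nlinarith
        have hs : L / γ ≤ Real.sqrt (2 * g n - (g n) ^ 2) := by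
          rw [Real.le_sqrt (by positivity) harg]
          rw [div_pow, div_le_iff₀ (by positivity), hL, div_pow,
            div_le_iff₀ (by positivity)]
          nlinarith [mul_nonneg (mul_nonneg ha hb) (sq_nonneg γ)]
        calc L = γ * (L / γ) := by field_simp
        _ ≤ γ * Real.sqrt (2 * g n - (g n) ^ 2) := by
            exact mul_le_mul_of_nonneg_left hs (le_of_lt h0)
      · have : Real.sqrt (2 * g n - (g n) ^ 2) ≤ 1 := by
          rw [show (1:ℝ) = Real.sqrt 1 by simp]
          exact Real.sqrt_le_sqrt (by nlinarith [sq_nonneg (1 - g n)])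
        nlinarith
  -- decreasing
  have hdec : ∀ n ≥ 1, g (n + 1) ≤ g n := by
    intro n hn
    obtain ⟨hl, hu⟩ := hinv n hn
    have ht0 : 0 < g n := lt_of_lt_of_le hLpos hl
    have ht1 : g n < 1 := lt_of_le_of_lt hu h1
    rw [hrec n hn]
    have hl' : 2 * γ ^ 2 ≤ g n * (1 + γ ^ 2) := by
      rw [hL, div_le_iff₀ hden] at hl; linarith
    have hs : Real.sqrt (2 * g n - (g n) ^ 2) ≤ g n / γ := by
      have hb : 2 * g n - (g n) ^ 2 ≤ (g n / γ) ^ 2 := by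
        rw [div_pow, le_div_iff₀ (by positivity)]
        nlinarith [mul_le_mul_of_nonneg_left hl' ht0.le]
      calc Real.sqrt (2 * g n - (g n) ^ 2) ≤ Real.sqrt ((g n / γ) ^ 2) :=
            Real.sqrt_le_sqrt hb
      _ = g n / γ := Real.sqrt_sq (by positivity)
    calc γ * Real.sqrt (2 * g n - (g n) ^ 2) ≤ γ * (g n / γ) :=
          mul_le_mul_of_nonneg_left hs (le_of_lt h0)
    _ = g n := by field_simp
  refine ⟨hdec, ?_⟩
  -- shifted sequence
  set h : ℕ → ℝ := fun n => g (n + 1) with hh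
  have hanti : Antitone h := by
    apply antitone_nat_of_succ_le
    intro n
    exact hdec (n + 1) (Nat.le_add_left 1 n)
  have hbdd : BddBelow (Set.range h) := by
    refine ⟨L, ?_⟩
    rintro x ⟨n, rfl⟩
    exact (hinv (n + 1) (Nat.le_add_left 1 n)).1
  have hc : Filter.Tendsto h Filter.atTop (nhds (⨅ n, h n)) :=
    tendsto_atTop_ciInf hanti hbdd
  set c : ℝ := ⨅ n, h n with hcdef
  have hcL : L ≤ c := le_ciInf fun n => (hinv (n + 1) (Nat.le_add_left 1 n)).1
  have hcγ : c ≤ γ := le_trans (ciInf_le hbdd 0) (hinv 1 le_rfl).2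
  have hc0 : 0 < c := lt_of_lt_of_le hLpos hcL
  have hc1 : c < 1 := lt_of_le_of_lt hcγ h1
  -- limit equation
  have hshift : Filter.Tendsto (fun n => h (n + 1)) Filter.atTop (nhds c) :=
    hc.comp (Filter.tendsto_add_atTop_nat 1)
  have heq2 : (fun n => h (n + 1)) = fun n => γ * Real.sqrt (2 * h n - (h n) ^ 2) := by
    funext n
    exact hrec (n + 1) (Nat.le_add_left 1 n)
  have hrhs : Filter.Tendsto (fun n => γ * Real.sqrt (2 * h n - (h n) ^ 2))
      Filter.atTop (nhds (γ * Real.sqrt (2 * c - c ^ 2))) := by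
    apply Filter.Tendsto.const_mul
    exact (Real.continuous_sqrt.tendsto _).comp ((hc.const_mul 2).sub (hc.pow 2))
  have hfix : c = γ * Real.sqrt (2 * c - c ^ 2) := by
    apply tendsto_nhds_unique hshift
    rw [heq2]; exact hrhs
  have hargc : 0 ≤ 2 * c - c ^ 2 := by nlinarith
  have hsq : c ^ 2 = γ ^ 2 * (2 * c - c ^ 2) := by
    have := congrArg (· ^ 2) hfix
    simpa [mul_pow, Real.sq_sqrt hargc] using this
  have hcL' : c = L := by
    have hz : c * ((1 + γ ^ 2) * c - 2 * γ ^ 2) = 0 := by ring_nf; nlinarith [hsq]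
    rcases mul_eq_zero.mp hz with h' | h'
    · exact absurd h' (ne_of_gt hc0)
    · rw [hL]; field_simp; linarith
  rw [← hcL']
  -- transfer limit from h to g
  have : Filter.Tendsto (fun n => g (n + 1)) Filter.atTop (nhds c) := hc
  exact (Filter.tendsto_add_atTop_iff_nat 1).mp this
end
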